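/- Let μ = supₙ μₙ with μₙ strictly increasing regular cardinals, and let q be a normal condition in Q with a(q) infinite. For every f ∈ ∏ₙ μₙ there exists a normal condition q' ≤ q such that either χ⁺_{q'}(n) < f(n) for all n ∈ a(q'), or f(n) < χ⁻_{q'}(n) for all n ∈ a(q'), where χ⁺_q(n) = sup(q ∩ [μₙ, μₙ₊₁)) and χ⁻_q(n) = min(q ∩ [μₙ, μₙ₊₁)) for n ∈ a(q). -/

import Mathlib

open Cardinal Set

noncomputable section

/-- Cardinality of a set of ordinals. -/
def scard (s : Set Ordinal.{0}) : Cardinal.{1} := Cardinal.mk s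

/-- The set of accumulation points of a set of ordinals `p`:
ordinals `α` such that `p ∩ α` is nonempty and unbounded in `α`. -/
def accSet (p : Set Ordinal.{0}) : Set Ordinal.{0} :=
  {α | (p ∩ Set.Iio α).Nonempty ∧ α = sSup (p ∩ Set.Iio α)}

/-- A set of ordinals is closed iff it contains all of its accumulation
points below its supremum. -/
def IsClosedCond (q : Set Ordinal.{0}) : Prop :=
  accSet q ∩ Set.Iio (sSup q) ⊆ q

/-- Order type of a set of ordinals. -/
def otp (s : Set Ordinal.{0}) : Ordinal.{1} :=
  Ordinal.type ((· < ·) : s → s → Prop)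

/-- Membership in the poset `P`: subsets of `μ` of cardinality `μ`. -/
def InP (μ : Cardinal.{0}) (p : Set Ordinal.{0}) : Prop :=
  p ⊆ Set.Iio μ.ord ∧ scard p = Cardinal.lift.{1,0} μ

/-- The almost-inclusion ordering: `p₁ ≤ p₂` iff `|p₁ \ p₂| < μ`. -/
def condLe (μ : Cardinal.{0}) (p₁ p₂ : Set Ordinal.{0}) : Prop :=
  scard (p₁ \ p₂) < Cardinal.lift.{1,0} μ

/-- Membership in the poset `Q`: closed subsets of `μ` of cardinality `μ`. -/
def InQ (μ : Cardinal.{0}) (q : Set Ordinal.{0}) : Prop :=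
  InP μ q ∧ IsClosedCond q

/-- The interval `[μₙ, μₙ₊₁)`. -/
def interval (μseq : ℕ → Cardinal.{0}) (n : ℕ) : Set Ordinal.{0} :=
  Set.Ico ((μseq n).ord) ((μseq (n+1)).ord)

/-- `a(q) = {n : q ∩ [μₙ, μₙ₊₁) ≠ ∅}`. -/
def aSet (μseq : ℕ → Cardinal.{0}) (q : Set Ordinal.{0}) : Set ℕ :=
  {n | (q ∩ interval μseq n).Nonempty}

/-- Normality: letting `⟨mₙ⟩` enumerate `a(q)` increasingly,
`otp (q ∩ [μ_{mₙ}, μ_{mₙ+1})) = μₙ + 1`. -/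
def IsNormalCond (μseq : ℕ → Cardinal.{0}) (q : Set Ordinal.{0}) : Prop :=
  ∃ m : ℕ → ℕ, StrictMono m ∧ Set.range m = aSet μseq q ∧
    ∀ n, otp (q ∩ interval μseq (m n)) = Ordinal.lift.{1,0} ((μseq n).ord + 1)

/-- `χ⁺_q(n) = sup (q ∩ [μₙ, μₙ₊₁))`. -/
def chiP (μseq : ℕ → Cardinal.{0}) (q : Set Ordinal.{0}) (n : ℕ) : Ordinal.{0} :=
  sSup (q ∩ interval μseq n)

/-- `χ⁻_q(n) = min (q ∩ [μₙ, μₙ₊₁))`. -/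
def chiM (μseq : ℕ → Cardinal.{0}) (q : Set Ordinal.{0}) (n : ℕ) : Ordinal.{0} :=
  sInf (q ∩ interval μseq n)

/-- `μₙ` is a strictly increasing sequence of regular cardinals with supremum `μ`. -/
def GoodSeq (μ : Cardinal.{0}) (μseq : ℕ → Cardinal.{0}) : Prop :=
  StrictMono μseq ∧ (∀ n, (μseq n).IsRegular) ∧ μ = ⨆ n, μseq n

/-!
Each block `q ∩ [μ_{mᵢ}, μ_{mᵢ+1})` has order type `μᵢ + 1`, and `μᵢ` is additively
indecomposable, so `f(mᵢ)` splits it into a part below and a part above of which one still has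
order type at least `μᵢ`. One of the two cases occurs for infinitely many `i`; keeping only those
blocks, each cut down to an initial segment of order type `μ_j + 1` (for the `j`-th kept block),
gives `q'`. Every piece is an order-convex part of the closed set `q` with a largest element,
which makes `q'` closed.
-/

section OrderType

lemma otp_mono {s t : Set Ordinal.{0}} (h : s ⊆ t) : otp s ≤ otp t :=
  RelEmbedding.ordinal_type_le ⟨⟨Set.inclusion h, Set.inclusion_injective h⟩, Iff.rfl⟩

lemma otp_singleton (x : Ordinal.{0}) : otp {x} = 1 :=
  Ordinal.type_eq_one_of_unique _

lemma card_otp (s : Set Ordinal.{0}) : (otp s).card = scard s :=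
  Ordinal.card_type _

lemma otp_eq_add (t : Set Ordinal.{0}) (p : Ordinal.{0}) :
    otp t = otp (t ∩ Iio p) + otp (t ∩ Ici p) := by
  unfold otp
  rw [← Ordinal.type_sum_lex]
  refine Ordinal.type_eq.2 ⟨RelIso.mk (Equiv.mk
      (fun x => if h : x.1 < p then Sum.inl ⟨x.1, x.2, h⟩ else Sum.inr ⟨x.1, x.2, not_lt.1 h⟩)
      (Sum.elim (fun a => ⟨a.1, a.2.1⟩) (fun a => ⟨a.1, a.2.1⟩)) ?_ ?_) ?_⟩
  · intro x
    by_cases h : x.1 < p <;> simp [h]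
  · rintro (⟨a, -, ha⟩ | ⟨a, -, ha⟩)
    · simp [show a < p from ha]
    · simp [not_lt.2 (show p ≤ a from ha)]
  · rintro ⟨a, -⟩ ⟨b, -⟩
    by_cases ha : a < p <;> by_cases hb : b < p <;>
      simp only [Equiv.coe_fn_mk, ha, hb, dite_true, dite_false, Sum.lex_inl_inl, Sum.lex_inr_inr,
        Sum.Lex.sep, Sum.lex_inr_inl, Subtype.mk_lt_mk, true_iff, false_iff, not_lt]
    · exact Iff.rfl
    · exact ha.trans_le (not_lt.1 hb)
    · exact (hb.trans_le (not_lt.1 ha)).le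
    · exact Iff.rfl

lemma otp_inter_Iio_eq_typein (t : Set Ordinal.{0}) (x : t) :
    otp (t ∩ Iio x.1) = Ordinal.typein ((· < ·) : t → t → Prop) x := by
  rw [← Ordinal.type_subrel]
  exact Ordinal.type_eq.2 ⟨RelIso.mk (Equiv.mk
    (fun y => ⟨⟨y.1, y.2.1⟩, y.2.2⟩) (fun y => ⟨y.1.1, y.1.2, y.2⟩)
    (fun _ => rfl) (fun _ => rfl)) Iff.rfl⟩

lemma exists_mem_otp_inter_Iic_eq {t : Set Ordinal.{0}} {β : Ordinal.{1}} (h : β + 1 ≤ otp t) :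
    ∃ e ∈ t, otp (t ∩ Iic e) = β + 1 := by
  have hβ : β < Ordinal.type ((· < ·) : t → t → Prop) := (Order.lt_add_one_iff.2 le_rfl).trans_le h
  set e := Ordinal.enum ((· < ·) : t → t → Prop) ⟨β, hβ⟩
  refine ⟨e.1, e.2, ?_⟩
  have hbelow : t ∩ Iic e.1 ∩ Iio e.1 = t ∩ Iio e.1 := by
    rw [inter_assoc, inter_eq_right.2 Iio_subset_Iic_self]
  have htop : t ∩ Iic e.1 ∩ Ici e.1 = {e.1} := by
    rw [inter_assoc, Iic_inter_Ici, Icc_self]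
    exact inter_eq_right.2 (singleton_subset_iff.2 e.2)
  rw [otp_eq_add _ e.1, hbelow, htop, otp_singleton, otp_inter_Iio_eq_typein t e,
    Ordinal.typein_enum]

lemma ord_le_otp_inter_Iio_or_Ioi {s : Set Ordinal.{0}} {κ : Cardinal.{1}} (hκ : ℵ₀ ≤ κ)
    (hs : otp s = κ.ord + 1) (p : Ordinal.{0}) :
    κ.ord ≤ otp (s ∩ Iio p) ∨ κ.ord ≤ otp (s ∩ Ioi p) := by
  by_contra! h
  obtain ⟨hlow, hhigh⟩ := h
  have hmid : otp (s ∩ Ici p) ≤ 1 + otp (s ∩ Ioi p) := by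
    rw [otp_eq_add (s ∩ Ici p) (Order.succ p), Order.Iio_succ, Order.Ici_succ]
    gcongr
    · calc otp (s ∩ Ici p ∩ Iic p) ≤ otp {p} := otp_mono fun x hx => le_antisymm hx.2 hx.1.2
        _ = 1 := otp_singleton p
    · exact otp_mono fun x hx => ⟨hx.1.1, hx.2⟩
  have hprin := Ordinal.isPrincipal_add_ord hκ
  have hone : 1 < κ.ord := Ordinal.one_lt_omega0.trans_le (Cardinal.omega0_le_ord.2 hκ)
  have : otp s < κ.ord :=
    calc otp s = otp (s ∩ Iio p) + otp (s ∩ Ici p) := otp_eq_add s p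
      _ ≤ otp (s ∩ Iio p) + (1 + otp (s ∩ Ioi p)) := add_le_add_right hmid _
      _ < κ.ord := hprin hlow (hprin hone hhigh)
  exact this.not_ge (hs ▸ le_self_add)

end OrderType

section Intervals

variable {μseq : ℕ → Cardinal.{0}}

lemma lt_of_mem_interval_of_lt (hmono : Monotone μseq) {n n' : ℕ} (h : n < n')
    {x y : Ordinal.{0}} (hx : x ∈ interval μseq n) (hy : y ∈ interval μseq n') : x < y :=
  hx.2.trans_le ((Cardinal.ord_le_ord.2 (hmono h)).trans hy.1)

lemma eq_of_mem_interval (hmono : Monotone μseq) {n n' : ℕ} {x : Ordinal.{0}}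
    (hx : x ∈ interval μseq n) (hx' : x ∈ interval μseq n') : n = n' := by
  rcases lt_trichotomy n n' with h | h | h
  · exact absurd (lt_of_mem_interval_of_lt hmono h hx hx') (lt_irrefl x)
  · exact h
  · exact absurd (lt_of_mem_interval_of_lt hmono h hx' hx) (lt_irrefl x)

variable {b : ℕ → ℕ} {P : ℕ → Set Ordinal.{0}}

lemma iUnion_inter_interval (hmono : Monotone μseq) (hb : StrictMono b)
    (hP : ∀ j, P j ⊆ interval μseq (b j)) (j : ℕ) :
    (⋃ i, P i) ∩ interval μseq (b j) = P j := by
  refine Subset.antisymm ?_ fun x hx => ⟨mem_iUnion.2 ⟨j, hx⟩, hP j hx⟩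
  rintro x ⟨hx, hxj⟩
  obtain ⟨i, hxi⟩ := mem_iUnion.1 hx
  rwa [hb.injective (eq_of_mem_interval hmono (hP i hxi) hxj)] at hxi

lemma aSet_iUnion (hmono : Monotone μseq) (hP : ∀ j, P j ⊆ interval μseq (b j))
    (hne : ∀ j, (P j).Nonempty) : aSet μseq (⋃ i, P i) = range b := by
  ext n
  constructor
  · rintro ⟨x, hx, hxn⟩
    obtain ⟨j, hxj⟩ := mem_iUnion.1 hx
    exact ⟨j, eq_of_mem_interval hmono (hP j hxj) hxn⟩
  · rintro ⟨j, rfl⟩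
    obtain ⟨x, hx⟩ := hne j
    exact ⟨x, mem_iUnion.2 ⟨j, hx⟩, hP j hx⟩

end Intervals

section Closed

lemma accSet_mono {s t : Set Ordinal.{0}} (h : s ⊆ t) : accSet s ⊆ accSet t := by
  rintro α ⟨hne, hα⟩
  have hsub : s ∩ Iio α ⊆ t ∩ Iio α := inter_subset_inter_left _ h
  refine ⟨hne.mono hsub, le_antisymm ?_ (csSup_le (hne.mono hsub) fun x hx => hx.2.le)⟩
  exact hα.le.trans (csSup_le_csSup ⟨α, fun x hx => hx.2.le⟩ hne hsub)

lemma IsClosedCond.inter_ordConnected {q C : Set Ordinal.{0}} (hq : IsClosedCond q)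
    (hbdd : BddAbove q) (hC : C.OrdConnected) : IsClosedCond (q ∩ C) := by
  rintro α ⟨hacc, hlt⟩
  obtain ⟨y, hy, hyα⟩ := hacc.1
  obtain ⟨x, hx, hαx⟩ := exists_lt_of_lt_csSup ⟨y, hy⟩ hlt
  refine ⟨hq ⟨accSet_mono inter_subset_left hacc, ?_⟩, hC.out hy.2 hx.2 ⟨hyα.le, hαx.le⟩⟩
  exact hαx.trans_le (le_csSup hbdd hx.1)

/-- Below a point of the union only finitely many blocks occur, so an accumulation point of the
union is one of the topmost of these blocks. -/
lemma isClosedCond_iUnion {P : ℕ → Set Ordinal.{0}}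
    (hlt : ∀ i j, i < j → ∀ x ∈ P i, ∀ y ∈ P j, x < y) (hcl : ∀ j, IsClosedCond (P j))
    {e : ℕ → Ordinal.{0}} (hmax : ∀ j, IsGreatest (P j) (e j)) : IsClosedCond (⋃ j, P j) := by
  rintro α ⟨⟨hne, hα⟩, hlt'⟩
  obtain ⟨x, hx, hαx⟩ := exists_lt_of_lt_csSup (hne.mono inter_subset_left) hlt'
  obtain ⟨j, hxj⟩ := mem_iUnion.1 hx
  set S : Set ℕ := {i | (P i ∩ Iio α).Nonempty}
  have hSj : ∀ i ∈ S, i ≤ j := fun i ⟨y, hyi, hyα⟩ =>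
    not_lt.1 fun hji => (hlt j i hji x hxj y hyi).not_gt (hyα.trans hαx)
  have hSne : S.Nonempty := by
    obtain ⟨y, hy, hyα⟩ := hne
    obtain ⟨i, hyi⟩ := mem_iUnion.1 hy
    exact ⟨i, y, hyi, hyα⟩
  set i₀ := sSup S
  have hne₀ : (P i₀ ∩ Iio α).Nonempty := Nat.sSup_mem hSne ⟨j, hSj⟩
  have hbdd : BddAbove (P i₀ ∩ Iio α) := ⟨α, fun z hz => hz.2.le⟩
  have hαsup : α = sSup (P i₀ ∩ Iio α) := by
    refine le_antisymm (hα.le.trans (csSup_le hne ?_)) (csSup_le hne₀ fun z hz => hz.2.le)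
    rintro z ⟨hz, hzα⟩
    obtain ⟨y₀, hy₀, hy₀α⟩ := hne₀
    obtain ⟨i, hzi⟩ := mem_iUnion.1 hz
    rcases (le_csSup ⟨j, hSj⟩ ⟨z, hzi, hzα⟩ : i ≤ i₀).lt_or_eq with hi | rfl
    · exact (hlt i i₀ hi z hzi y₀ hy₀).le.trans (le_csSup hbdd ⟨hy₀, hy₀α⟩)
    · exact le_csSup hbdd ⟨hzi, hzα⟩
  have hαe : α ≤ e i₀ := hαsup ▸ csSup_le hne₀ fun z hz => (hmax i₀).2 hz.1
  refine mem_iUnion.2 ⟨i₀, ?_⟩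
  rcases hαe.lt_or_eq with hαe | hαe
  · exact hcl i₀ ⟨⟨hne₀, hαsup⟩, (hmax i₀).csSup_eq ▸ hαe⟩
  · exact hαe ▸ (hmax i₀).1

end Closed

lemma condLe_of_subset {μ : Cardinal.{0}} (hμ : μ ≠ 0) {p q : Set Ordinal.{0}} (h : p ⊆ q) :
    condLe μ p q := by
  rw [condLe, sdiff_eq_empty.2 h, scard, Cardinal.mk_eq_zero]
  exact Cardinal.zero_lt_lift_iff.2 (pos_iff_ne_zero.2 hμ)

lemma Set.Infinite.exists_strictMono_lt {S : Set ℕ} (hS : S.Infinite) :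
    ∃ k : ℕ → ℕ, StrictMono k ∧ ∀ j, k j ∈ S ∧ j < k j :=
  ⟨fun j => Nat.nth (· ∈ S) (j + 1), fun _ _ h => (Nat.nth_lt_nth hS).2 (by omega),
    fun j => ⟨Nat.nth_mem_of_infinite hS _, (Nat.nth_strictMono hS).le_apply⟩⟩

section Thinning

variable {μ : Cardinal.{0}} {μseq : ℕ → Cardinal.{0}} {q : Set Ordinal.{0}}

/-- The block `q ∩ C j` is cut off at its element of rank `μ_j`, so that the blocks together
form a normal condition. -/
theorem exists_normal_le_of_blocks (hmono : StrictMono μseq) (hinf : ∀ n, ℵ₀ ≤ μseq n)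
    (hμ : μ = ⨆ n, μseq n) (hq : InQ μ q) {b : ℕ → ℕ} (hb : StrictMono b)
    {C : ℕ → Set Ordinal.{0}} (hC : ∀ j, (C j).OrdConnected)
    (hCint : ∀ j, C j ⊆ interval μseq (b j))
    (hotp : ∀ j, (Cardinal.lift.{1} (μseq j)).ord + 1 ≤ otp (q ∩ C j)) :
    ∃ q', InQ μ q' ∧ IsNormalCond μseq q' ∧ condLe μ q' q ∧
      ∀ n ∈ aSet μseq q', ∃ j, n = b j ∧ chiP μseq q' n ∈ C j ∧ chiM μseq q' n ∈ C j := by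
  choose e he hotpe using fun j => exists_mem_otp_inter_Iic_eq (hotp j)
  set P : ℕ → Set Ordinal.{0} := fun j => q ∩ C j ∩ Iic (e j)
  have hPq : ∀ j, P j ⊆ q := fun j x hx => hx.1.1
  have hPint : ∀ j, P j ⊆ interval μseq (b j) := fun j x hx => hCint j hx.1.2
  have hPmax : ∀ j, IsGreatest (P j) (e j) := fun j => ⟨⟨he j, self_mem_Iic⟩, fun x hx => hx.2⟩
  have hPcl : ∀ j, IsClosedCond (P j) := fun j => by
    simpa only [P, inter_assoc] using
      hq.2.inter_ordConnected ⟨μ.ord, fun x hx => (hq.1.1 hx).le⟩ ((hC j).inter ordConnected_Iic)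
  have hPcard : ∀ j, scard (P j) = Cardinal.lift.{1} (μseq j) := fun j => by
    rw [← card_otp, hotpe j, Ordinal.card_add_one, Cardinal.card_ord,
      Cardinal.add_one_eq (Cardinal.aleph0_le_lift.2 (hinf j))]
  have hblock := iUnion_inter_interval hmono.monotone hb hPint
  have hrange := aSet_iUnion hmono.monotone hPint fun j => ⟨e j, (hPmax j).1⟩
  have hμ0 : μ ≠ 0 :=
    (Cardinal.aleph0_pos.trans_le ((hinf 0).trans (hμ ▸ le_ciSup (bddAbove_of_small) 0))).ne'
  refine ⟨⋃ j, P j, ⟨⟨?_, ?_⟩, ?_⟩, ⟨b, hb, hrange.symm, fun j => ?_⟩,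
    condLe_of_subset hμ0 (iUnion_subset hPq), fun n hn => ?_⟩
  · exact iUnion_subset fun j => (hPq j).trans hq.1.1
  · refine le_antisymm (hq.1.2 ▸ Cardinal.mk_le_mk_of_subset (iUnion_subset hPq)) ?_
    rw [hμ, Cardinal.lift_iSup (bddAbove_of_small)]
    exact ciSup_le fun j => hPcard j ▸ Cardinal.mk_le_mk_of_subset (subset_iUnion P j)
  · exact isClosedCond_iUnion (fun i j hij x hx y hy =>
      lt_of_mem_interval_of_lt hmono.monotone (hb hij) (hPint i hx) (hPint j hy)) hPcl hPmax
  · rw [hblock, hotpe, Ordinal.lift_add, Ordinal.lift_one, Cardinal.lift_ord]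
  · obtain ⟨j, rfl⟩ := hrange ▸ hn
    refine ⟨j, rfl, ?_, ?_⟩
    · rw [chiP, hblock, (hPmax j).csSup_eq]
      exact (he j).2
    · rw [chiM, hblock]
      exact (csInf_mem ⟨e j, (hPmax j).1⟩).1.2

theorem exists_normal_le_of_infinite (hmono : StrictMono μseq) (hinf : ∀ n, ℵ₀ ≤ μseq n)
    (hμ : μ = ⨆ n, μseq n) (hq : InQ μ q) {m : ℕ → ℕ} (hm : StrictMono m)
    {C : ℕ → Set Ordinal.{0}} (hC : ∀ i, (C i).OrdConnected)
    (hCint : ∀ i, C i ⊆ interval μseq (m i)) {S : Set ℕ} (hS : S.Infinite)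
    (hotp : ∀ i ∈ S, (Cardinal.lift.{1} (μseq i)).ord ≤ otp (q ∩ C i)) :
    ∃ q', InQ μ q' ∧ IsNormalCond μseq q' ∧ condLe μ q' q ∧
      ∀ n ∈ aSet μseq q', ∃ i, n = m i ∧ chiP μseq q' n ∈ C i ∧ chiM μseq q' n ∈ C i := by
  obtain ⟨k, hk, hkS⟩ := hS.exists_strictMono_lt
  have hotp' : ∀ j, (Cardinal.lift.{1} (μseq j)).ord + 1 ≤ otp (q ∩ C (k j)) := fun j =>
    calc (Cardinal.lift.{1} (μseq j)).ord + 1 ≤ (Cardinal.lift.{1} (μseq (k j))).ord :=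
          Order.add_one_le_of_lt (Cardinal.ord_lt_ord.2 (Cardinal.lift_lt.2 (hmono (hkS j).2)))
      _ ≤ otp (q ∩ C (k j)) := hotp _ (hkS j).1
  obtain ⟨q', hq', hnorm, hle, hchi⟩ :=
    exists_normal_le_of_blocks hmono hinf hμ hq (hm.comp hk) (fun j => hC (k j)) (fun j => hCint (k j))
      hotp'
  refine ⟨q', hq', hnorm, hle, fun n hn => ?_⟩
  obtain ⟨j, hj⟩ := hchi n hn
  exact ⟨k j, hj⟩

end Thinning

theorem stmt_7_general (μ : Cardinal.{0})
    (μseq : ℕ → Cardinal.{0}) (hseq : GoodSeq μ μseq)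
    (q : Set Ordinal.{0}) (hq : InQ μ q) (hn : IsNormalCond μseq q)
    (f : ℕ → Ordinal.{0}) :
    ∃ q' : Set Ordinal.{0}, InQ μ q' ∧ IsNormalCond μseq q' ∧ condLe μ q' q ∧
      ((∀ n ∈ aSet μseq q', chiP μseq q' n < f n) ∨
       (∀ n ∈ aSet μseq q', f n < chiM μseq q' n)) := by
  obtain ⟨hmono, hreg, hμ⟩ := hseq
  have hinf : ∀ n, ℵ₀ ≤ μseq n := fun n => (hreg n).aleph0_le
  obtain ⟨m, hm, -, hotp⟩ := hn
  set below : ℕ → Set Ordinal.{0} := fun i => interval μseq (m i) ∩ Iio (f (m i))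
  set above : ℕ → Set Ordinal.{0} := fun i => interval μseq (m i) ∩ Ioi (f (m i))
  have hsplit : ∀ i, (Cardinal.lift.{1} (μseq i)).ord ≤ otp (q ∩ below i) ∨
      (Cardinal.lift.{1} (μseq i)).ord ≤ otp (q ∩ above i) := fun i => by
    have h := ord_le_otp_inter_Iio_or_Ioi (Cardinal.aleph0_le_lift.2 (hinf i))
      (by rw [hotp, Ordinal.lift_add, Ordinal.lift_one, Cardinal.lift_ord]) (f (m i))
    rwa [inter_assoc, inter_assoc] at h
  have hcover : {i | (Cardinal.lift.{1} (μseq i)).ord ≤ otp (q ∩ below i)} ∪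
      {i | (Cardinal.lift.{1} (μseq i)).ord ≤ otp (q ∩ above i)} = Set.univ :=
    eq_univ_of_forall hsplit
  rcases infinite_union.1 (hcover ▸ infinite_univ) with hS | hS
  · obtain ⟨q', hq', hnorm, hle, hchi⟩ := exists_normal_le_of_infinite hmono hinf hμ hq hm
      (fun i => ordConnected_Ico.inter ordConnected_Iio) (fun i => inter_subset_left) hS
      fun i hi => hi
    refine ⟨q', hq', hnorm, hle, Or.inl fun n hn => ?_⟩
    obtain ⟨i, rfl, hi, -⟩ := hchi n hn
    exact hi.2
  · obtain ⟨q', hq', hnorm, hle, hchi⟩ := exists_normal_le_of_infinite hmono hinf hμ hq hm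
      (fun i => ordConnected_Ico.inter ordConnected_Ioi) (fun i => inter_subset_left) hS
      fun i hi => hi
    refine ⟨q', hq', hnorm, hle, Or.inr fun n hn => ?_⟩
    obtain ⟨i, rfl, -, hi⟩ := hchi n hn
    exact hi.2

/-- For every  and every normal  there is a normal
 with either  for all , or
 for all . -/
theorem stmt_7 (μ : Cardinal.{0}) (hinf : Cardinal.aleph0 < μ)
    (hcof : μ.ord.cof = Cardinal.aleph0)
    (μseq : ℕ → Cardinal.{0}) (hseq : GoodSeq μ μseq)
    (q : Set Ordinal.{0}) (hq : InQ μ q) (hn : IsNormalCond μseq q)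
    (hainf : (aSet μseq q).Infinite)
    (hchi : ∀ n ∈ aSet μseq q, chiP μseq q n < (μseq (n+1)).ord)
    (f : ℕ → Ordinal.{0}) (hf : ∀ n, f n < (μseq (n+1)).ord) :
    ∃ q' : Set Ordinal.{0}, InQ μ q' ∧ IsNormalCond μseq q' ∧ condLe μ q' q ∧
      ((∀ n ∈ aSet μseq q', chiP μseq q' n < f n) ∨
       (∀ n ∈ aSet μseq q', f n < chiM μseq q' n)) :=
  stmt_7_general μ μseq hseq q hq hn f
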